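/- There is a universal constant c > 0 such that the following holds. Let n ≥ 1, γ ∈ (0,1], and let ρ be a 2ⁿ × 2ⁿ complex matrix indexed by 𝔽₂ⁿ that is Hermitian, positive semidefinite, and has trace 1. Define p : 𝔽₂^{2n} → ℝ by p(v,w) = 2^{-n} · |Tr(W_{v,w} · ρ)|². If 2ⁿ · ∑_{x,y ∈ 𝔽₂^{2n}} p(x) · p(y) · p(x+y) ≥ γ, then there exists a finite set S ⊆ 𝔽₂^{2n} such that: (i) (γ²/80)·2ⁿ ≤ |S| ≤ (4/γ)·2ⁿ; (ii) every (v,w) ∈ S satisfies |Tr(W_{v,w} · ρ)|² ≥ γ/4; and (iii) |{(s,s') ∈ S × S : s + s' ∈ S}| ≥ c·γ⁵·|S|². -/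

import Mathlib

open Finset
open scoped ComplexOrder

/-- The Weyl operator `W_{v,w}` as a `2ⁿ × 2ⁿ` complex matrix indexed by `𝔽₂ⁿ`. -/
noncomputable def Weyl (n : ℕ) (v w : Fin n → ZMod 2) :
    Matrix (Fin n → ZMod 2) (Fin n → ZMod 2) ℂ :=
  fun y x =>
    if y = x + v then
      Complex.I ^ (∑ i, (v i).val * (w i).val) *
        (-1 : ℂ) ^ (∑ i, w i * x i : ZMod 2).val
    else 0

/-- The characteristic distribution of a mixed state `ρ`:
`p(v,w) = 2^{-n}·|Tr(W_{v,w} ρ)|²`. -/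
noncomputable def charDistM (n : ℕ)
    (ρ : Matrix (Fin n → ZMod 2) (Fin n → ZMod 2) ℂ) :
    (Fin n → ZMod 2) × (Fin n → ZMod 2) → ℝ :=
  fun x => ((2 : ℝ) ^ n)⁻¹ * ‖(Weyl n x.1 x.2 * ρ).trace‖ ^ 2

namespace Stmt8Aux

abbrev V (n : ℕ) := Fin n → ZMod 2

/-! ### basic ZMod 2 facts -/

lemma zmod2_add_self (a : ZMod 2) : a + a = 0 := by revert a; decide

lemma add_self_V {n : ℕ} (x : V n) : x + x = 0 := by
  funext i; exact zmod2_add_self _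

lemma addv {n : ℕ} (x v : V n) : x + v + v = x := by
  funext i
  simp [add_assoc, zmod2_add_self]

lemma eq_add_iff {n : ℕ} (x z v : V n) : x = z + v ↔ z = x + v := by
  constructor <;> intro h <;> simp [h, addv]

lemma sgn_mul (a b : ZMod 2) :
    (-1 : ℂ) ^ a.val * (-1 : ℂ) ^ b.val = (-1 : ℂ) ^ (a + b).val := by
  rw [ZMod.val_add, ← neg_one_pow_eq_pow_mod_two, pow_add]

lemma card_V (n : ℕ) : Fintype.card (V n) = 2 ^ n := by
  simp [Fintype.card_fun]

/-! ### complex helpers -/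

lemma norm_sq_complex (z : ℂ) : ‖z‖ ^ 2 = z.re * z.re + z.im * z.im := by
  rw [Complex.sq_norm, Complex.normSq_apply]

lemma conj_mul_self (m : ℂ) : (starRingEnd ℂ) m * m = ((‖m‖^2 : ℝ) : ℂ) := by
  rw [mul_comm, Complex.mul_conj]
  push_cast
  rw [Complex.normSq_eq_norm_sq]
  push_cast
  ring

lemma mul_conj_self (z : ℂ) : z * starRingEnd ℂ z = ((‖z‖^2 : ℝ) : ℂ) := by
  rw [Complex.mul_conj]
  push_cast
  rw [Complex.normSq_eq_norm_sq]
  push_cast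
  ring

lemma conj_sgn (a : ZMod 2) :
    starRingEnd ℂ ((-1 : ℂ) ^ a.val) = (-1 : ℂ) ^ a.val := by
  rw [map_pow]
  simp

lemma norm_sgn (a : ZMod 2) : ‖(-1 : ℂ) ^ a.val‖ = 1 := by
  rw [norm_pow, norm_neg, norm_one, one_pow]

/-! ### PSD matrix entry bounds -/

variable {N : Type*} [Fintype N] [DecidableEq N]

lemma diag_re_nonneg {M : Matrix N N ℂ} (hM : M.PosSemidef) (x : N) :
    0 ≤ (M x x).re := by
  have h := hM.re_dotProduct_nonneg (Pi.single x 1)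
  simpa [dotProduct, Matrix.mulVec_single, Pi.single_apply, Finset.sum_ite_eq',
    apply_ite] using h

omit [Fintype N] [DecidableEq N] in
lemma diag_im_zero {M : Matrix N N ℂ} (hM : M.IsHermitian) (x : N) :
    (M x x).im = 0 := by
  have h2 := congrArg Complex.im (hM.apply x x)
  simp only [Complex.star_def, Complex.conj_im] at h2
  linarith

lemma entry_sq_le {M : Matrix N N ℂ} (hM : M.PosSemidef) (x y : N) :
    ‖M x y‖ ^ 2 ≤ (M x x).re * (M y y).re := by
  rcases eq_or_ne x y with rfl | hxy
  · have h0 := diag_re_nonneg hM x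
    have him := diag_im_zero hM.isHermitian x
    rw [norm_sq_complex, him]
    nlinarith
  rcases eq_or_ne (M x y) 0 with hm | hm
  · rw [hm]
    simpa using mul_nonneg (diag_re_nonneg hM x) (diag_re_nonneg hM y)
  have hmnorm : (0:ℝ) < ‖M x y‖ := norm_pos_iff.mpr hm
  have hyx : M y x = starRingEnd ℂ (M x y) := by
    have := hM.isHermitian.apply y x
    simpa [Complex.star_def] using this.symm
  have key : ∀ t : ℝ, 0 ≤ (‖M x y‖^2 * (M x x).re) * (t * t)
      + (-(2 * ‖M x y‖^3)) * t + ‖M x y‖^2 * (M y y).re := by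
    intro t
    set a : ℂ := (t : ℂ) * M x y with ha
    set b : ℂ := ((-‖M x y‖ : ℝ) : ℂ) with hb
    set z : N → ℂ := Pi.single x a + Pi.single y b with hz
    have h := hM.re_dotProduct_nonneg z
    have hsz : star z = Pi.single x (starRingEnd ℂ a) + Pi.single y (starRingEnd ℂ b) := by
      rw [hz, star_add, ← Pi.single_star, ← Pi.single_star]
      rfl
    have hexp : dotProduct (star z) (M.mulVec z) =
        starRingEnd ℂ a * (M x x * a) + starRingEnd ℂ a * (M x y * b)
          + starRingEnd ℂ b * (M y x * a) + starRingEnd ℂ b * (M y y * b) := by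
      rw [hsz, hz, Matrix.mulVec_add, Matrix.mulVec_single, Matrix.mulVec_single,
        add_dotProduct, dotProduct_add, dotProduct_add,
        single_dotProduct, single_dotProduct, single_dotProduct,
        single_dotProduct]
      simp only [Pi.smul_apply, Matrix.col_apply, op_smul_eq_mul]
      ring
    have hid : starRingEnd ℂ a * (M x x * a) + starRingEnd ℂ a * (M x y * b)
          + starRingEnd ℂ b * (M y x * a) + starRingEnd ℂ b * (M y y * b)
        = ((t * t * ‖M x y‖^2 : ℝ) : ℂ) * M x x
          + ((-(2 * t * ‖M x y‖^3) : ℝ) : ℂ)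
          + ((‖M x y‖^2 : ℝ) : ℂ) * M y y := by
      rw [ha, hb, hyx]
      have hcm := conj_mul_self (M x y)
      have hb' : (starRingEnd ℂ) ((-‖M x y‖ : ℝ) : ℂ) = ((-‖M x y‖ : ℝ) : ℂ) :=
        Complex.conj_ofReal _
      rw [map_mul, Complex.conj_ofReal, hb']
      push_cast
      push_cast at hcm
      linear_combination ((t:ℂ) * (t:ℂ) * M x x - (t:ℂ) * ‖M x y‖ - (t:ℂ) * ‖M x y‖) * hcm
    rw [hexp, hid] at h
    simp only [RCLike.re_to_complex, Complex.add_re, Complex.ofReal_re,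
      Complex.re_ofReal_mul] at h
    nlinarith [h]
  have hd := discrim_le_zero key
  rw [discrim] at hd
  nlinarith [hd, pow_pos hmnorm 4, pow_pos hmnorm 2]

/-! ### character sums -/

lemma char_sum {n : ℕ} (u : V n) :
    ∑ w : V n, (-1 : ℂ) ^ (∑ i, w i * u i : ZMod 2).val
      = if u = 0 then (2 : ℂ) ^ n else 0 := by
  by_cases hu : u = 0
  · rw [if_pos hu, hu]
    simp [card_V]
  · rw [if_neg hu]
    obtain ⟨i₀, hi₀⟩ : ∃ i, u i ≠ 0 := by
      by_contra h
      push_neg at h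
      exact hu (funext h)
    have hall : ∀ a : ZMod 2, a ≠ 0 → a = 1 := by decide
    have hui : u i₀ = 1 := hall _ hi₀
    set e : V n := Pi.single i₀ 1 with he
    set f : V n → ℂ := fun w => (-1 : ℂ) ^ (∑ i, w i * u i : ZMod 2).val with hf
    have h1 : ∑ w, f (w + e) = ∑ w, f w :=
      Fintype.sum_equiv (Equiv.addRight e) _ _ (fun w => rfl)
    have h2 : ∀ w : V n, f (w + e) = - f w := by
      intro w
      have hip : (∑ i, (w + e) i * u i : ZMod 2) = (∑ i, w i * u i) + 1 := by
        have hterm : ∀ i, (w + e) i * u i = w i * u i + e i * u i := by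
          intro i; simp [add_mul]
        rw [Finset.sum_congr rfl (fun i _ => hterm i), Finset.sum_add_distrib]
        congr 1
        rw [he]
        simp [Pi.single_apply, ite_mul, Finset.sum_ite_eq', hui]
      show (-1:ℂ) ^ (∑ i, (w+e) i * u i : ZMod 2).val
          = -(-1:ℂ) ^ (∑ i, w i * u i : ZMod 2).val
      rw [hip, ← sgn_mul, ZMod.val_one]
      ring
    rw [Finset.sum_congr rfl (fun w _ => h2 w), Finset.sum_neg_distrib] at h1
    linear_combination - h1 / 2

lemma parseval_v {n : ℕ} (g : V n → ℂ) :
    ∑ w : V n, ‖∑ y : V n, (-1 : ℂ) ^ (∑ i, w i * y i : ZMod 2).val * g y‖ ^ 2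
      = 2 ^ n * ∑ y : V n, ‖g y‖ ^ 2 := by
  set F : V n → ℂ := fun w => ∑ y : V n, (-1 : ℂ) ^ (∑ i, w i * y i : ZMod 2).val * g y
    with hF
  have key : ∑ w : V n, F w * starRingEnd ℂ (F w)
      = (2 : ℂ) ^ n * ∑ y : V n, g y * starRingEnd ℂ (g y) := by
    have hconj : ∀ w, starRingEnd ℂ (F w)
        = ∑ y : V n, (-1 : ℂ) ^ (∑ i, w i * y i : ZMod 2).val * starRingEnd ℂ (g y) := by
      intro w
      rw [hF]
      rw [map_sum]
      exact Finset.sum_congr rfl fun y _ => by rw [map_mul, conj_sgn]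
    have expand : ∀ w, F w * starRingEnd ℂ (F w)
        = ∑ y : V n, ∑ y' : V n,
            (-1 : ℂ) ^ (∑ i, w i * (y + y') i : ZMod 2).val * (g y * starRingEnd ℂ (g y')) := by
      intro w
      rw [hconj, hF, Finset.sum_mul_sum]
      refine Finset.sum_congr rfl fun y _ => Finset.sum_congr rfl fun y' _ => ?_
      have hbil : (∑ i, w i * y i : ZMod 2) + (∑ i, w i * y' i) = ∑ i, w i * (y + y') i := by
        rw [← Finset.sum_add_distrib]
        exact Finset.sum_congr rfl fun i _ => by simp [mul_add]
      rw [← hbil, ← sgn_mul]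
      ring
    rw [Finset.sum_congr rfl fun w _ => expand w]
    rw [Finset.sum_comm]
    have inner : ∀ y : V n, (∑ w : V n, ∑ y' : V n,
        (-1 : ℂ) ^ (∑ i, w i * (y + y') i : ZMod 2).val * (g y * starRingEnd ℂ (g y')))
        = (2:ℂ)^n * (g y * starRingEnd ℂ (g y)) := by
      intro y
      rw [Finset.sum_comm]
      have hsw : ∀ y' : V n, ∑ w : V n,
          (-1 : ℂ) ^ (∑ i, w i * (y + y') i : ZMod 2).val * (g y * starRingEnd ℂ (g y'))
          = (if y + y' = 0 then (2:ℂ)^n else 0) * (g y * starRingEnd ℂ (g y')) := by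
        intro y'
        rw [← Finset.sum_mul, char_sum]
      rw [Finset.sum_congr rfl fun y' _ => hsw y']
      have hiff : ∀ y' : V n, (y + y' = 0) ↔ (y' = y) := by
        intro y'
        constructor
        · intro h
          have h2 : y + (y + y') = y + 0 := by rw [h]
          rwa [← add_assoc, add_self_V, zero_add, add_zero] at h2
        · intro h; rw [h, add_self_V]
      have hsplit : ∀ y' : V n,
          (if y + y' = 0 then (2:ℂ)^n else 0) * (g y * starRingEnd ℂ (g y'))
          = if y' = y then (2:ℂ)^n * (g y * starRingEnd ℂ (g y')) else 0 := by
        intro y'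
        rw [if_congr (hiff y') rfl rfl, ite_mul, zero_mul]
      rw [Finset.sum_congr rfl fun y' _ => hsplit y', Finset.sum_ite_eq' univ y]
      simp
    rw [Finset.sum_congr rfl fun y _ => inner y, ← Finset.mul_sum]
  have lhs_cast : ∑ w : V n, F w * starRingEnd ℂ (F w)
      = ((∑ w : V n, ‖F w‖^2 : ℝ) : ℂ) := by
    rw [Complex.ofReal_sum]
    exact Finset.sum_congr rfl fun w _ => mul_conj_self (F w)
  have rhs_cast : ∑ y : V n, g y * starRingEnd ℂ (g y)
      = ((∑ y : V n, ‖g y‖^2 : ℝ) : ℂ) := by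
    rw [Complex.ofReal_sum]
    exact Finset.sum_congr rfl fun y _ => mul_conj_self (g y)
  rw [lhs_cast, rhs_cast] at key
  rw [show ((2:ℂ)^n) = (((2:ℝ)^n : ℝ) : ℂ) by push_cast; ring, ← Complex.ofReal_mul] at key
  exact Complex.ofReal_injective key

/-! ### trace formula -/

lemma trace_weyl_mul {n : ℕ} (v w : V n) (ρ : Matrix (V n) (V n) ℂ) :
    (Weyl n v w * ρ).trace =
      Complex.I ^ (∑ i, (v i).val * (w i).val) *
        ∑ y : V n, (-1 : ℂ) ^ (∑ i, w i * y i : ZMod 2).val * ρ y (y + v) := by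
  rw [Matrix.trace]
  have step1 : ∀ x : V n, (Weyl n v w * ρ).diag x
      = Complex.I ^ (∑ i, (v i).val * (w i).val) *
          ((-1 : ℂ) ^ (∑ i, w i * (x + v) i : ZMod 2).val * ρ (x + v) x) := by
    intro x
    rw [Matrix.diag_apply, Matrix.mul_apply]
    have hterm : ∀ z : V n, Weyl n v w x z * ρ z x
        = if z = x + v then Complex.I ^ (∑ i, (v i).val * (w i).val) *
            ((-1 : ℂ) ^ (∑ i, w i * z i : ZMod 2).val * ρ z x) else 0 := by
      intro z
      rw [Weyl]
      by_cases h : x = z + v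
      · rw [if_pos h, if_pos ((eq_add_iff x z v).mp h)]
        ring
      · rw [if_neg h, if_neg (fun hc => h ((eq_add_iff x z v).mpr hc)), zero_mul]
    rw [Finset.sum_congr rfl (fun z _ => hterm z), Finset.sum_ite_eq' univ (x + v)]
    simp
  rw [Finset.sum_congr rfl (fun x _ => step1 x), ← Finset.mul_sum]
  congr 1
  apply Fintype.sum_equiv (Equiv.addRight v)
  intro x
  simp only [Equiv.coe_addRight]
  rw [addv]

lemma norm_trace_sq {n : ℕ} (v w : V n) (ρ : Matrix (V n) (V n) ℂ) :
    ‖(Weyl n v w * ρ).trace‖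
      = ‖∑ y : V n, (-1 : ℂ) ^ (∑ i, w i * y i : ZMod 2).val * ρ y (y + v)‖ := by
  rw [trace_weyl_mul, norm_mul, norm_pow, Complex.norm_I, one_pow, one_mul]

/-! ### global bounds for a state -/

variable {n : ℕ} {ρ : Matrix (V n) (V n) ℂ}

lemma trace_diag_re (htr : ρ.trace = 1) : ∑ y : V n, (ρ y y).re = 1 := by
  have h := congrArg Complex.re htr
  rw [Matrix.trace, Complex.re_sum] at h
  simpa [Matrix.diag_apply] using h

lemma diag_shift_sum (htr : ρ.trace = 1) (v : V n) :
    ∑ y : V n, (ρ (y + v) (y + v)).re = 1 := by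
  rw [← trace_diag_re htr]
  exact Equiv.sum_comp (Equiv.addRight v) (fun y => (ρ y y).re)

lemma entries_sum_le (hpsd : ρ.PosSemidef) (htr : ρ.trace = 1) :
    ∑ y : V n, ∑ z : V n, ‖ρ y z‖^2 ≤ 1 := by
  have h1 : ∑ y : V n, ∑ z : V n, ‖ρ y z‖^2
      ≤ ∑ y : V n, ∑ z : V n, (ρ y y).re * (ρ z z).re := by
    refine Finset.sum_le_sum fun y _ => Finset.sum_le_sum fun z _ => ?_
    exact entry_sq_le hpsd y z
  have h2 : ∑ y : V n, ∑ z : V n, (ρ y y).re * (ρ z z).re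
      = (∑ y : V n, (ρ y y).re) * (∑ z : V n, (ρ z z).re) := by
    rw [Finset.sum_mul]
    exact Finset.sum_congr rfl fun y _ => (Finset.mul_sum _ _ _).symm
  rw [h2, trace_diag_re htr] at h1
  simpa using h1

lemma sum_sum_normsq_trace (ρ : Matrix (V n) (V n) ℂ) :
    ∑ v : V n, ∑ w : V n, ‖(Weyl n v w * ρ).trace‖^2
      = 2^n * ∑ y : V n, ∑ z : V n, ‖ρ y z‖^2 := by
  have h1 : ∀ v : V n, ∑ w : V n, ‖(Weyl n v w * ρ).trace‖^2
      = 2^n * ∑ y : V n, ‖ρ y (y + v)‖^2 := by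
    intro v
    rw [Finset.sum_congr rfl fun w _ => by rw [norm_trace_sq v w ρ]]
    exact parseval_v _
  rw [Finset.sum_congr rfl fun v _ => h1 v, ← Finset.mul_sum]
  congr 1
  rw [Finset.sum_comm]
  refine Finset.sum_congr rfl fun y _ => ?_
  have := Equiv.sum_comp (Equiv.addLeft y) (fun z => ‖ρ y z‖^2)
  simpa using this

lemma norm_trace_le_one (hpsd : ρ.PosSemidef) (htr : ρ.trace = 1) (v w : V n) :
    ‖(Weyl n v w * ρ).trace‖ ≤ 1 := by
  rw [norm_trace_sq]
  calc ‖∑ y : V n, (-1 : ℂ) ^ (∑ i, w i * y i : ZMod 2).val * ρ y (y + v)‖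
      ≤ ∑ y : V n, ‖(-1 : ℂ) ^ (∑ i, w i * y i : ZMod 2).val * ρ y (y + v)‖ :=
        norm_sum_le _ _
    _ = ∑ y : V n, ‖ρ y (y + v)‖ := by
        refine Finset.sum_congr rfl fun y _ => ?_
        rw [norm_mul, norm_sgn, one_mul]
    _ ≤ ∑ y : V n, ((ρ y y).re + (ρ (y+v) (y+v)).re) / 2 := by
        refine Finset.sum_le_sum fun y _ => ?_
        have h1 := entry_sq_le hpsd y (y + v)
        have h2 := diag_re_nonneg hpsd y
        have h3 := diag_re_nonneg hpsd (y + v)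
        nlinarith [norm_nonneg (ρ y (y + v)), sq_nonneg ((ρ y y).re - (ρ (y+v) (y+v)).re)]
    _ = 1 := by
        rw [← Finset.sum_div, Finset.sum_add_distrib, trace_diag_re htr, diag_shift_sum htr v]
        norm_num

end Stmt8Aux

section Comb

variable {G : Type*} [Fintype G] [DecidableEq G] [AddCommGroup G]

/-- union sum bound -/
lemma sum_union_le' (A B : Finset G) (f : G → ℝ) (hf : ∀ q, 0 ≤ f q) :
    ∑ q ∈ A ∪ B, f q ≤ ∑ q ∈ A, f q + ∑ q ∈ B, f q := by
  have h := Finset.sum_union_inter (s₁ := A) (s₂ := B) (f := f)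
  have h2 : 0 ≤ ∑ q ∈ A ∩ B, f q := Finset.sum_nonneg fun q _ => hf q
  linarith

set_option maxHeartbeats 1000000 in
theorem comb_main (N γ : ℝ) (hN : 0 < N) (hγ0 : 0 < γ) (hγ1 : γ ≤ 1)
    (P : G → ℝ) (hp0 : ∀ x, 0 ≤ P x) (hple : ∀ x, P x ≤ N⁻¹)
    (hsum : ∑ x : G, P x ≤ 1)
    (hcard : (Fintype.card G : ℝ) = N^2)
    (S : Finset G) (hS : ∀ x, x ∈ S ↔ N⁻¹ * (γ/4) ≤ P x)
    (H : γ ≤ N * ∑ x : G, ∑ y : G, P x * P y * P (x + y)) :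
    (γ^2/80) * N ≤ (S.card : ℝ) ∧ (S.card : ℝ) ≤ (4/γ) * N ∧
      (1/64) * γ^5 * (S.card:ℝ)^2 ≤ (((S ×ˢ S).filter (fun q => q.1 + q.2 ∈ S)).card : ℝ) := by
  have hNne : N ≠ 0 := ne_of_gt hN
  have hPnotS : ∀ x, x ∉ S → P x ≤ N⁻¹ * (γ/4) := by
    intro x hx
    by_contra h
    exact hx ((hS x).mpr (le_of_not_ge h))
  -- card upper bound
  have hcard_up : (S.card : ℝ) * (N⁻¹ * (γ/4)) ≤ 1 := by
    calc (S.card : ℝ) * (N⁻¹ * (γ/4)) ≤ ∑ x ∈ S, P x := by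
          have := Finset.card_nsmul_le_sum S P (N⁻¹ * (γ/4)) (fun x hx => (hS x).mp hx)
          simpa [nsmul_eq_mul] using this
      _ ≤ ∑ x : G, P x :=
          Finset.sum_le_sum_of_subset_of_nonneg (Finset.subset_univ S) (fun q _ _ => hp0 q)
      _ ≤ 1 := hsum
  have hk_up : (S.card : ℝ) ≤ (4/γ) * N := by
    have h := mul_le_mul_of_nonneg_right hcard_up hN.le
    rw [show (S.card:ℝ) * (N⁻¹*(γ/4)) * N = (S.card:ℝ)*(γ/4)*(N⁻¹*N) by ring,
      inv_mul_cancel₀ hNne, mul_one, one_mul] at h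
    rw [div_mul_eq_mul_div, le_div_iff₀ hγ0]
    linarith
  -- triple set
  set T := (S ×ˢ S).filter (fun q : G × G => q.1 + q.2 ∈ S) with hT
  have hmemT : ∀ q : G × G, q ∈ T ↔ q.1 ∈ S ∧ q.2 ∈ S ∧ q.1 + q.2 ∈ S := by
    intro q
    simp [hT, Finset.mem_filter, Finset.mem_product, and_assoc]
  set f : G × G → ℝ := fun q => P q.1 * P q.2 * P (q.1 + q.2) with hf
  have hf0 : ∀ q, 0 ≤ f q := fun q =>
    mul_nonneg (mul_nonneg (hp0 _) (hp0 _)) (hp0 _)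
  have hfg : ∑ q : G × G, f q = ∑ x : G, ∑ y : G, P x * P y * P (x + y) := by
    rw [hf]
    exact Fintype.sum_prod_type _
  have htot : γ / N ≤ ∑ q : G × G, f q := by
    rw [div_le_iff₀ hN]
    have hcomm : (∑ q : G × G, f q) * N = N * ∑ x : G, ∑ y : G, P x * P y * P (x + y) := by
      rw [hfg]; ring
    linarith [H, hcomm]
  -- sums of pair marginals
  have hsum_sq : ∀ (g : G × G → ℝ), (∀ q, g q = P q.2 * P (q.1 + q.2)) ∨ True → True := fun _ _ => trivial
  have hmarg1 : ∑ q : G × G, P q.2 * P (q.1 + q.2) ≤ 1 := by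
    rw [Fintype.sum_prod_type, Finset.sum_comm]
    have : ∀ y : G, ∑ x : G, P y * P (x + y) = P y * ∑ z : G, P z := by
      intro y
      rw [← Finset.mul_sum]
      congr 1
      exact Equiv.sum_comp (Equiv.addRight y) P
    rw [Finset.sum_congr rfl fun y _ => this y, ← Finset.sum_mul]
    exact mul_le_one₀ hsum (Finset.sum_nonneg fun x _ => hp0 x) hsum
  have hmarg2 : ∑ q : G × G, P q.1 * P (q.1 + q.2) ≤ 1 := by
    rw [Fintype.sum_prod_type]
    have : ∀ x : G, ∑ y : G, P x * P (x + y) = P x * ∑ z : G, P z := by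
      intro x
      rw [← Finset.mul_sum]
      congr 1
      exact Equiv.sum_comp (Equiv.addLeft x) P
    rw [Finset.sum_congr rfl fun x _ => this x, ← Finset.sum_mul]
    exact mul_le_one₀ hsum (Finset.sum_nonneg fun x _ => hp0 x) hsum
  have hmarg3 : ∑ q : G × G, P q.1 * P q.2 ≤ 1 := by
    rw [Fintype.sum_prod_type]
    have : ∀ x : G, ∑ y : G, P x * P y = P x * ∑ z : G, P z := fun x => (Finset.mul_sum _ _ _).symm
    rw [Finset.sum_congr rfl fun x _ => this x, ← Finset.sum_mul]
    exact mul_le_one₀ hsum (Finset.sum_nonneg fun x _ => hp0 x) hsum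
  -- bad sets
  set A1 := univ.filter (fun q : G × G => q.1 ∉ S) with hA1def
  set A2 := univ.filter (fun q : G × G => q.2 ∉ S) with hA2def
  set A3 := univ.filter (fun q : G × G => q.1 + q.2 ∉ S) with hA3def
  have hbound1 : ∑ q ∈ A1, f q ≤ N⁻¹ * (γ/4) := by
    calc ∑ q ∈ A1, f q ≤ ∑ q ∈ A1, (N⁻¹ * (γ/4)) * (P q.2 * P (q.1 + q.2)) := by
          refine Finset.sum_le_sum fun q hq => ?_
          have hq1 : q.1 ∉ S := (Finset.mem_filter.mp hq).2
          rw [hf]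
          calc P q.1 * P q.2 * P (q.1 + q.2) = P q.1 * (P q.2 * P (q.1 + q.2)) := by ring
            _ ≤ (N⁻¹ * (γ/4)) * (P q.2 * P (q.1 + q.2)) :=
              mul_le_mul_of_nonneg_right (hPnotS _ hq1) (mul_nonneg (hp0 _) (hp0 _))
      _ ≤ ∑ q : G × G, (N⁻¹ * (γ/4)) * (P q.2 * P (q.1 + q.2)) := by
          refine Finset.sum_le_sum_of_subset_of_nonneg (Finset.subset_univ _) fun q _ _ => ?_
          exact mul_nonneg (mul_nonneg (inv_nonneg.mpr hN.le) (by linarith)) (mul_nonneg (hp0 _) (hp0 _))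
      _ = (N⁻¹ * (γ/4)) * ∑ q : G × G, P q.2 * P (q.1 + q.2) := by rw [← Finset.mul_sum]
      _ ≤ (N⁻¹ * (γ/4)) * 1 := by
          refine mul_le_mul_of_nonneg_left hmarg1 ?_
          exact mul_nonneg (inv_nonneg.mpr hN.le) (by linarith)
      _ = N⁻¹ * (γ/4) := by ring
  have hbound2 : ∑ q ∈ A2, f q ≤ N⁻¹ * (γ/4) := by
    calc ∑ q ∈ A2, f q ≤ ∑ q ∈ A2, (N⁻¹ * (γ/4)) * (P q.1 * P (q.1 + q.2)) := by
          refine Finset.sum_le_sum fun q hq => ?_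
          have hq2 : q.2 ∉ S := (Finset.mem_filter.mp hq).2
          rw [hf]
          calc P q.1 * P q.2 * P (q.1 + q.2) = P q.2 * (P q.1 * P (q.1 + q.2)) := by ring
            _ ≤ (N⁻¹ * (γ/4)) * (P q.1 * P (q.1 + q.2)) :=
              mul_le_mul_of_nonneg_right (hPnotS _ hq2) (mul_nonneg (hp0 _) (hp0 _))
      _ ≤ ∑ q : G × G, (N⁻¹ * (γ/4)) * (P q.1 * P (q.1 + q.2)) := by
          refine Finset.sum_le_sum_of_subset_of_nonneg (Finset.subset_univ _) fun q _ _ => ?_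
          exact mul_nonneg (mul_nonneg (inv_nonneg.mpr hN.le) (by linarith)) (mul_nonneg (hp0 _) (hp0 _))
      _ = (N⁻¹ * (γ/4)) * ∑ q : G × G, P q.1 * P (q.1 + q.2) := by rw [← Finset.mul_sum]
      _ ≤ (N⁻¹ * (γ/4)) * 1 := by
          refine mul_le_mul_of_nonneg_left hmarg2 ?_
          exact mul_nonneg (inv_nonneg.mpr hN.le) (by linarith)
      _ = N⁻¹ * (γ/4) := by ring
  have hbound3 : ∑ q ∈ A3, f q ≤ N⁻¹ * (γ/4) := by
    calc ∑ q ∈ A3, f q ≤ ∑ q ∈ A3, (N⁻¹ * (γ/4)) * (P q.1 * P q.2) := by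
          refine Finset.sum_le_sum fun q hq => ?_
          have hq3 : q.1 + q.2 ∉ S := (Finset.mem_filter.mp hq).2
          rw [hf]
          calc P q.1 * P q.2 * P (q.1 + q.2) = P (q.1 + q.2) * (P q.1 * P q.2) := by ring
            _ ≤ (N⁻¹ * (γ/4)) * (P q.1 * P q.2) :=
              mul_le_mul_of_nonneg_right (hPnotS _ hq3) (mul_nonneg (hp0 _) (hp0 _))
      _ ≤ ∑ q : G × G, (N⁻¹ * (γ/4)) * (P q.1 * P q.2) := by
          refine Finset.sum_le_sum_of_subset_of_nonneg (Finset.subset_univ _) fun q _ _ => ?_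
          exact mul_nonneg (mul_nonneg (inv_nonneg.mpr hN.le) (by linarith)) (mul_nonneg (hp0 _) (hp0 _))
      _ = (N⁻¹ * (γ/4)) * ∑ q : G × G, P q.1 * P q.2 := by rw [← Finset.mul_sum]
      _ ≤ (N⁻¹ * (γ/4)) * 1 := by
          refine mul_le_mul_of_nonneg_left hmarg3 ?_
          exact mul_nonneg (inv_nonneg.mpr hN.le) (by linarith)
      _ = N⁻¹ * (γ/4) := by ring
  -- split total sum
  have hsplit : ∑ q : G × G, f q
      = ∑ q ∈ T, f q + ∑ q ∈ univ.filter (fun q => q ∉ T), f q := by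
    rw [← Finset.sum_filter_add_sum_filter_not univ (fun q => q ∈ T) f]
    congr 1
    apply Finset.sum_congr _ (fun _ _ => rfl)
    ext q
    simp
  have hrest : ∑ q ∈ univ.filter (fun q => q ∉ T), f q ≤ 3 * (N⁻¹ * (γ/4)) := by
    have hsub : univ.filter (fun q : G × G => q ∉ T) ⊆ A1 ∪ A2 ∪ A3 := by
      intro q hq
      have hq' : q ∉ T := (Finset.mem_filter.mp hq).2
      rw [hmemT] at hq'
      push_neg at hq'
      simp only [hA1def, hA2def, hA3def, Finset.mem_union, Finset.mem_filter,
        Finset.mem_univ, true_and]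
      by_cases h1 : q.1 ∈ S
      · by_cases h2 : q.2 ∈ S
        · exact Or.inr (hq' h1 h2)
        · exact Or.inl (Or.inr h2)
      · exact Or.inl (Or.inl h1)
    calc ∑ q ∈ univ.filter (fun q : G × G => q ∉ T), f q
        ≤ ∑ q ∈ A1 ∪ A2 ∪ A3, f q :=
          Finset.sum_le_sum_of_subset_of_nonneg hsub (fun q _ _ => hf0 q)
      _ ≤ ∑ q ∈ A1 ∪ A2, f q + ∑ q ∈ A3, f q := sum_union_le' _ _ _ hf0
      _ ≤ (∑ q ∈ A1, f q + ∑ q ∈ A2, f q) + ∑ q ∈ A3, f q := by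
          have := sum_union_le' A1 A2 f hf0
          linarith
      _ ≤ 3 * (N⁻¹ * (γ/4)) := by linarith
  have hTsum : γ/(4*N) ≤ ∑ q ∈ T, f q := by
    have h1 : γ/N ≤ ∑ q ∈ T, f q + 3 * (N⁻¹ * (γ/4)) := by
      rw [hsplit] at htot
      linarith
    have h2 : 3 * (N⁻¹ * (γ/4)) = 3*γ/(4*N) := by field_simp
    have h3 : γ/N - 3*γ/(4*N) = γ/(4*N) := by field_simp; ring
    linarith [h1, h2.symm ▸ h1]
  -- upper bound on each term of T sum
  have hTsum_up : ∑ q ∈ T, f q ≤ (T.card : ℝ) * (N⁻¹)^3 := by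
    calc ∑ q ∈ T, f q ≤ ∑ _q ∈ T, (N⁻¹)^3 := by
          refine Finset.sum_le_sum fun q _ => ?_
          rw [hf]
          have h1 := hple q.1
          have h2 := hple q.2
          have h3 := hple (q.1 + q.2)
          have i0 : (0:ℝ) ≤ N⁻¹ := inv_nonneg.mpr hN.le
          calc P q.1 * P q.2 * P (q.1 + q.2) ≤ N⁻¹ * N⁻¹ * N⁻¹ := by
                refine mul_le_mul (mul_le_mul h1 h2 (hp0 _) i0) h3 (hp0 _) ?_
                exact mul_nonneg i0 i0
            _ = (N⁻¹)^3 := by ring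
      _ = (T.card : ℝ) * (N⁻¹)^3 := by rw [Finset.sum_const, nsmul_eq_mul]
  have hT_low : γ/4 * N^2 ≤ (T.card : ℝ) := by
    have h := le_trans hTsum hTsum_up
    have h2 := mul_le_mul_of_nonneg_right h (le_of_lt (pow_pos hN 3))
    rw [show (T.card:ℝ) * (N⁻¹)^3 * N^3 = (T.card:ℝ) * ((N⁻¹*N)^3) by ring,
      inv_mul_cancel₀ hNne, one_pow, mul_one] at h2
    calc γ/4 * N^2 = γ/(4*N) * N^3 := by field_simp
      _ ≤ (T.card : ℝ) := h2
  -- |T| ≤ |S|²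
  have hT_up : (T.card : ℝ) ≤ (S.card : ℝ)^2 := by
    have h := Finset.card_le_card (show T ⊆ S ×ˢ S by rw [hT]; exact Finset.filter_subset _ _)
    rw [Finset.card_product] at h
    calc (T.card : ℝ) ≤ ((S.card * S.card : ℕ) : ℝ) := by exact_mod_cast h
      _ = (S.card : ℝ)^2 := by push_cast; ring
  -- card lower bound
  have hk_low : (γ^2/80) * N ≤ (S.card : ℝ) := by
    have ha : (0:ℝ) ≤ γ^2/80 * N := by positivity
    have hk0 : (0:ℝ) ≤ (S.card : ℝ) := Nat.cast_nonneg _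
    have hγ3 : γ^3 ≤ 1 := pow_le_one₀ hγ0.le hγ1
    have hγ4 : γ^4 ≤ γ := by
      calc γ^4 = γ^3 * γ := by ring
        _ ≤ 1 * γ := mul_le_mul_of_nonneg_right hγ3 hγ0.le
        _ = γ := one_mul γ
    have hsq : (γ^2/80 * N)^2 ≤ (S.card : ℝ)^2 := by
      have hstep : (γ^2/80 * N)^2 ≤ γ/4 * N^2 := by
        have h5 := mul_le_mul_of_nonneg_right hγ4 (sq_nonneg N)
        have h6 := mul_nonneg hγ0.le (sq_nonneg N)
        nlinarith [h5, h6]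
      linarith [hT_low, hT_up]
    exact (pow_le_pow_iff_left₀ ha hk0 (by norm_num)).mp hsq
  refine ⟨hk_low, hk_up, ?_⟩
  -- triple density
  have hkγ : (S.card : ℝ) * γ ≤ 4 * N := by
    have := hk_up
    rw [div_mul_eq_mul_div, le_div_iff₀ hγ0] at this
    linarith
  have hk0 : (0:ℝ) ≤ (S.card : ℝ) := Nat.cast_nonneg _
  have h2 : ((S.card:ℝ) * γ) * ((S.card:ℝ) * γ) ≤ (4*N) * (4*N) :=
    mul_le_mul hkγ hkγ (mul_nonneg hk0 hγ0.le) (by positivity)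
  have h3 : γ^3 * (S.card:ℝ)^2 ≤ 64 * (T.card : ℝ) := by
    have h2' := mul_le_mul_of_nonneg_left h2 hγ0.le
    nlinarith [h2', hT_low]
  have h4 : γ^5 * (S.card:ℝ)^2 ≤ γ^3 * (S.card:ℝ)^2 := by
    have hfac : (0:ℝ) ≤ 1 - γ^2 := by nlinarith
    nlinarith [mul_nonneg (mul_nonneg (pow_nonneg hγ0.le 3) (sq_nonneg ((S.card:ℝ)))) hfac]
  rw [hT] at h3
  linarith


end Comb


/-- mixed-state version of the approximate-subgroup theorem. -/
theorem stmt_8 :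
    ∃ c : ℝ, 0 < c ∧
      ∀ n : ℕ, 1 ≤ n → ∀ γ : ℝ, γ ∈ Set.Ioc (0 : ℝ) 1 →
        ∀ ρ : Matrix (Fin n → ZMod 2) (Fin n → ZMod 2) ℂ,
          ρ.IsHermitian → ρ.PosSemidef → ρ.trace = 1 →
          (2 : ℝ) ^ n *
              (∑ x : (Fin n → ZMod 2) × (Fin n → ZMod 2),
                ∑ y : (Fin n → ZMod 2) × (Fin n → ZMod 2),
                  charDistM n ρ x * charDistM n ρ y * charDistM n ρ (x + y)) ≥ γ →
          ∃ S : Finset ((Fin n → ZMod 2) × (Fin n → ZMod 2)),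
            (γ ^ 2 / 80) * 2 ^ n ≤ (S.card : ℝ) ∧
            (S.card : ℝ) ≤ (4 / γ) * 2 ^ n ∧
            (∀ x ∈ S, ‖(Weyl n x.1 x.2 * ρ).trace‖ ^ 2 ≥ γ / 4) ∧
            c * γ ^ 5 * (S.card : ℝ) ^ 2 ≤
              (((S ×ˢ S).filter (fun q => q.1 + q.2 ∈ S)).card : ℝ) := by
  refine ⟨1/64, by norm_num, ?_⟩
  intro n hn γ hγ ρ hherm hpsd htr H
  obtain ⟨hγ0, hγ1⟩ := hγ
  set N : ℝ := (2:ℝ)^n with hN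
  have hNpos : 0 < N := by positivity
  have hNinvpos : 0 < N⁻¹ := inv_pos.mpr hNpos
  -- basic bounds on the characteristic distribution
  have hPx : ∀ x : (Stmt8Aux.V n) × (Stmt8Aux.V n),
      charDistM n ρ x = N⁻¹ * ‖(Weyl n x.1 x.2 * ρ).trace‖^2 := fun x => rfl
  have hp0 : ∀ x, 0 ≤ charDistM n ρ x := by
    intro x
    rw [hPx]
    positivity
  have htr_le : ∀ v w : Stmt8Aux.V n, ‖(Weyl n v w * ρ).trace‖^2 ≤ 1 := by
    intro v w
    have h := Stmt8Aux.norm_trace_le_one hpsd htr v w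
    nlinarith [norm_nonneg ((Weyl n v w * ρ).trace)]
  have hple : ∀ x, charDistM n ρ x ≤ N⁻¹ := by
    intro x
    rw [hPx]
    calc N⁻¹ * ‖(Weyl n x.1 x.2 * ρ).trace‖^2 ≤ N⁻¹ * 1 :=
          mul_le_mul_of_nonneg_left (htr_le x.1 x.2) hNinvpos.le
      _ = N⁻¹ := mul_one _
  have hsum : ∑ x : (Stmt8Aux.V n) × (Stmt8Aux.V n), charDistM n ρ x ≤ 1 := by
    have e1 : ∑ x : (Stmt8Aux.V n) × (Stmt8Aux.V n), charDistM n ρ x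
        = ∑ v : Stmt8Aux.V n, ∑ w : Stmt8Aux.V n, N⁻¹ * ‖(Weyl n v w * ρ).trace‖^2 :=
      Fintype.sum_prod_type _
    have e2 : ∑ v : Stmt8Aux.V n, ∑ w : Stmt8Aux.V n, N⁻¹ * ‖(Weyl n v w * ρ).trace‖^2
        = N⁻¹ * ∑ v : Stmt8Aux.V n, ∑ w : Stmt8Aux.V n, ‖(Weyl n v w * ρ).trace‖^2 := by
      rw [Finset.mul_sum]
      exact Finset.sum_congr rfl fun v _ => (Finset.mul_sum _ _ _).symm
    rw [e1, e2, Stmt8Aux.sum_sum_normsq_trace ρ, ← hN, ← mul_assoc,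
      inv_mul_cancel₀ (ne_of_gt hNpos), one_mul]
    exact Stmt8Aux.entries_sum_le hpsd htr
  -- the candidate set
  set S : Finset ((Stmt8Aux.V n) × (Stmt8Aux.V n)) :=
    univ.filter (fun x => γ/4 ≤ ‖(Weyl n x.1 x.2 * ρ).trace‖^2) with hSdef
  have hS : ∀ x, x ∈ S ↔ N⁻¹ * (γ/4) ≤ charDistM n ρ x := by
    intro x
    rw [hSdef, Finset.mem_filter, hPx]
    constructor
    · intro h
      exact mul_le_mul_of_nonneg_left h.2 hNinvpos.le
    · intro h
      exact ⟨Finset.mem_univ x, le_of_mul_le_mul_left h hNinvpos⟩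
  have Hγ : γ ≤ N * ∑ x : (Stmt8Aux.V n) × (Stmt8Aux.V n),
      ∑ y : (Stmt8Aux.V n) × (Stmt8Aux.V n),
        charDistM n ρ x * charDistM n ρ y * charDistM n ρ (x + y) := H
  have main := comb_main N γ hNpos hγ0 hγ1 (charDistM n ρ) hp0 hple hsum
    (by
      rw [Fintype.card_prod, Stmt8Aux.card_V]
      push_cast
      rw [hN]
      ring) S hS Hγ
  refine ⟨S, main.1, main.2.1, ?_, main.2.2⟩
  intro x hx
  rw [hSdef, Finset.mem_filter] at hx
  exact hx.2
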